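/- For every δ ∈ (0,1), the equation (1+α²)Φ(−α) − αφ(α) = δ/2 has a unique non-negative solution α_min(δ). -/

import Mathlib

/-- Standard Gaussian density φ. -/
noncomputable def stdGaussPDF (z : ℝ) : ℝ := Real.exp (-z^2/2) / Real.sqrt (2*Real.pi)

/-- Standard Gaussian CDF Φ. -/
noncomputable def stdGaussCDF (z : ℝ) : ℝ := ∫ u in Set.Iic z, stdGaussPDF u

/-!
`F(α) = (1 + α²) Φ(-α) - α φ(α)` has derivative `2 (α Φ(-α) - φ(α))`, and Mills' inequality
`α Φ(-α) < φ(α)` (the gap is `∫_{u ≤ -α} (-u - α) φ(u) du > 0`) makes `F` strictly decreasing.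
Since `F(0) = Φ(0) = 1/2 ≥ δ/2` and, again by Mills, `F(α) < φ(α)/α ≤ 1/α`, the intermediate
value theorem on `[0, 2/δ]` gives a root of `F = δ/2`, unique by strict monotonicity.
-/

open Real MeasureTheory ProbabilityTheory Set Filter Topology

section FTC

variable {E : Type*} [NormedAddCommGroup E] [NormedSpace ℝ E] [CompleteSpace E]

theorem hasDerivAt_integral_Iic {f : ℝ → E} {x : ℝ} (hf : Integrable f)
    (hfx : ContinuousAt f x) : HasDerivAt (fun z => ∫ u in Iic z, f u) (f x) x := by
  have hsplit :
      (fun z => ∫ u in Iic z, f u) = fun z => (∫ u in Iic x, f u) + ∫ u in x..z, f u := by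
    funext z
    rw [← intervalIntegral.integral_Iic_sub_Iic hf.integrableOn hf.integrableOn, add_sub_cancel]
  rw [hsplit]
  exact (intervalIntegral.integral_hasDerivAt_right hf.intervalIntegrable
    hf.aestronglyMeasurable.stronglyMeasurableAtFilter hfx).const_add _

theorem integral_Iic_of_hasDerivAt_of_integrable {f f' : ℝ → E} (a : ℝ)
    (hderiv : ∀ x, HasDerivAt f (f' x) x) (hf : Integrable f) (hf' : Integrable f') :
    ∫ x in Iic a, f' x = f a := by
  have hbot : Tendsto f atBot (𝓝 0) := tendsto_zero_of_hasDerivAt_of_integrableOn_Iic (a := a)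
    (fun x _ => hderiv x) hf'.integrableOn hf.integrableOn
  rw [integral_Iic_of_hasDerivAt_of_tendsto' (fun x _ => hderiv x) hf'.integrableOn hbot, sub_zero]

end FTC

theorem integral_Iic_zero_of_even {f : ℝ → ℝ} (hf : Integrable f) (heven : ∀ x, f (-x) = f x) :
    ∫ x in Iic 0, f x = (∫ x, f x) / 2 := by
  have hsym : ∫ x in Ioi 0, f x = ∫ x in Iic 0, f x := by
    simpa only [heven, neg_zero] using (integral_comp_neg_Iic 0 f).symm
  have hsum := intervalIntegral.integral_Iic_add_Ioi (b := 0) hf.integrableOn hf.integrableOn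
  linarith

theorem stdGaussPDF_eq_gaussianPDFReal : stdGaussPDF = gaussianPDFReal 0 1 := by
  funext z
  simp [stdGaussPDF, gaussianPDFReal, div_eq_inv_mul]

theorem stdGaussPDF_pos (z : ℝ) : 0 < stdGaussPDF z := by
  rw [stdGaussPDF_eq_gaussianPDFReal]
  exact gaussianPDFReal_pos 0 1 z one_ne_zero

theorem stdGaussPDF_le_one (z : ℝ) : stdGaussPDF z ≤ 1 := by
  have h2π : 1 ≤ √(2 * π) := one_le_sqrt.2 (by linarith [pi_gt_three])
  exact div_le_one_of_le₀ ((exp_le_one_iff.2 (by linarith [sq_nonneg z])).trans h2π) (by positivity)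

theorem stdGaussPDF_neg (z : ℝ) : stdGaussPDF (-z) = stdGaussPDF z := by
  simp only [stdGaussPDF, neg_sq]

theorem integrable_stdGaussPDF : Integrable stdGaussPDF :=
  stdGaussPDF_eq_gaussianPDFReal ▸ integrable_gaussianPDFReal 0 1

theorem integral_stdGaussPDF : ∫ z, stdGaussPDF z = 1 :=
  stdGaussPDF_eq_gaussianPDFReal ▸ integral_gaussianPDFReal_eq_one 0 one_ne_zero

theorem integrable_mul_stdGaussPDF : Integrable fun z => z * stdGaussPDF z := by
  have h := (integrable_mul_exp_neg_mul_sq (one_half_pos (α := ℝ))).div_const √(2 * π)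
  refine h.congr (ae_of_all _ fun z => ?_)
  simp only [stdGaussPDF]
  ring_nf

theorem hasDerivAt_stdGaussPDF (z : ℝ) : HasDerivAt stdGaussPDF (-z * stdGaussPDF z) z := by
  have hexp : HasDerivAt (fun x : ℝ => -x ^ 2 / 2) (-z) z := by
    simpa using ((hasDerivAt_pow 2 z).neg.div_const 2).congr_deriv (by ring)
  exact (hexp.exp.div_const √(2 * π)).congr_deriv (by simp only [stdGaussPDF]; ring)

theorem continuous_stdGaussPDF : Continuous stdGaussPDF :=
  continuous_iff_continuousAt.2 fun z => (hasDerivAt_stdGaussPDF z).continuousAt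

theorem hasDerivAt_stdGaussCDF (z : ℝ) : HasDerivAt stdGaussCDF (stdGaussPDF z) z :=
  hasDerivAt_integral_Iic integrable_stdGaussPDF continuous_stdGaussPDF.continuousAt

theorem stdGaussCDF_zero : stdGaussCDF 0 = 1 / 2 := by
  rw [stdGaussCDF, integral_Iic_zero_of_even integrable_stdGaussPDF stdGaussPDF_neg,
    integral_stdGaussPDF]

theorem integral_Iic_neg_mul_stdGaussPDF (a : ℝ) :
    ∫ u in Iic a, -u * stdGaussPDF u = stdGaussPDF a :=
  integral_Iic_of_hasDerivAt_of_integrable a hasDerivAt_stdGaussPDF integrable_stdGaussPDF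
    (by simpa only [neg_mul] using integrable_mul_stdGaussPDF.fun_neg)

theorem mul_stdGaussCDF_neg_lt_stdGaussPDF (α : ℝ) : α * stdGaussCDF (-α) < stdGaussPDF α := by
  have hint : Integrable fun u => (-u - α) * stdGaussPDF u := by
    have h := integrable_mul_stdGaussPDF.fun_neg.sub (integrable_stdGaussPDF.const_mul α)
    refine h.congr (ae_of_all _ fun u => ?_)
    simp only [Pi.sub_apply]
    ring
  have hgap : stdGaussPDF α - α * stdGaussCDF (-α) =
      ∫ u in Iic (-α), (-u - α) * stdGaussPDF u := by
    calc stdGaussPDF α - α * stdGaussCDF (-α)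
        = (∫ u in Iic (-α), -u * stdGaussPDF u) - ∫ u in Iic (-α), α * stdGaussPDF u := by
          rw [integral_Iic_neg_mul_stdGaussPDF, stdGaussPDF_neg, integral_const_mul, stdGaussCDF]
      _ = ∫ u in Iic (-α), (-u - α) * stdGaussPDF u := by
          rw [← integral_sub (integrable_mul_stdGaussPDF.fun_neg.integrableOn.congr_fun
            (fun u _ => (neg_mul u _).symm) measurableSet_Iic)
            (integrable_stdGaussPDF.const_mul α).integrableOn]
          simp only [sub_mul]
  have hpos : 0 < ∫ u in Iic (-α), (-u - α) * stdGaussPDF u := by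
    have hnonneg : ∀ u ∈ Iic (-α), 0 ≤ (-u - α) * stdGaussPDF u := fun u hu =>
      mul_nonneg (by linarith [mem_Iic.1 hu]) (stdGaussPDF_pos u).le
    have hsupp : Iio (-α) ⊆ Function.support (fun u => (-u - α) * stdGaussPDF u) ∩ Iic (-α) :=
      fun u hu => ⟨mul_ne_zero (by linarith [mem_Iio.1 hu]) (stdGaussPDF_pos u).ne',
        mem_Iic.2 (le_of_lt hu)⟩
    rw [setIntegral_pos_iff_support_of_nonneg_ae
      ((ae_restrict_iff' measurableSet_Iic).2 (ae_of_all _ hnonneg)) hint.integrableOn]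
    exact (volume_Iio (a := -α) ▸ ENNReal.zero_lt_top).trans_le (measure_mono hsupp)
  linarith

/-- `𝔼[((Z - α)⁺)²]` for `Z ∼ 𝒩(0, 1)`. -/
noncomputable def gaussUpperPartialMoment (α : ℝ) : ℝ :=
  (1 + α ^ 2) * stdGaussCDF (-α) - α * stdGaussPDF α

theorem hasDerivAt_gaussUpperPartialMoment (α : ℝ) :
    HasDerivAt gaussUpperPartialMoment (2 * (α * stdGaussCDF (-α) - stdGaussPDF α)) α := by
  have hcdf : HasDerivAt (fun x => stdGaussCDF (-x)) (-stdGaussPDF α) α := by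
    simpa [Function.comp_def, stdGaussPDF_neg] using
      (hasDerivAt_stdGaussCDF (-α)).comp α (hasDerivAt_neg α)
  have hsq : HasDerivAt (fun x : ℝ => 1 + x ^ 2) (2 * α) α := by
    simpa using (hasDerivAt_pow 2 α).const_add 1
  exact ((hsq.mul hcdf).sub ((hasDerivAt_id α).mul (hasDerivAt_stdGaussPDF α))).congr_deriv
    (by simp only [id_eq]; ring)

theorem strictAnti_gaussUpperPartialMoment : StrictAnti gaussUpperPartialMoment :=
  strictAnti_of_hasDerivAt_neg hasDerivAt_gaussUpperPartialMoment fun α => by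
    linarith [mul_stdGaussCDF_neg_lt_stdGaussPDF α]

theorem continuous_gaussUpperPartialMoment : Continuous gaussUpperPartialMoment :=
  continuous_iff_continuousAt.2 fun α => (hasDerivAt_gaussUpperPartialMoment α).continuousAt

theorem gaussUpperPartialMoment_zero : gaussUpperPartialMoment 0 = 1 / 2 := by
  simp [gaussUpperPartialMoment, stdGaussCDF_zero]

theorem gaussUpperPartialMoment_lt_div {α : ℝ} (hα : 0 < α) :
    gaussUpperPartialMoment α < stdGaussPDF α / α := by
  have hmills : stdGaussCDF (-α) < stdGaussPDF α / α := by
    rw [lt_div_iff₀ hα, mul_comm]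
    exact mul_stdGaussCDF_neg_lt_stdGaussPDF α
  calc gaussUpperPartialMoment α
      < (1 + α ^ 2) * (stdGaussPDF α / α) - α * stdGaussPDF α := by
        unfold gaussUpperPartialMoment; gcongr
    _ = stdGaussPDF α / α := by field_simp; ring

/-- For δ ∈ (0,1), the equation (1+α²)Φ(−α) − αφ(α) = δ/2 has a unique
non-negative solution α_min(δ). -/
theorem alpha_min_exists_unique (δ : ℝ) (hδ : δ ∈ Set.Ioo (0:ℝ) 1) :
    ∃! α : ℝ, 0 ≤ α ∧ (1+α^2) * stdGaussCDF (-α) - α * stdGaussPDF α = δ/2 := by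
  obtain ⟨hδ0, hδ1⟩ := hδ
  have hb : gaussUpperPartialMoment (2 / δ) < δ / 2 :=
    calc gaussUpperPartialMoment (2 / δ) < stdGaussPDF (2 / δ) / (2 / δ) :=
          gaussUpperPartialMoment_lt_div (by positivity)
      _ ≤ 1 / (2 / δ) := by gcongr; exact stdGaussPDF_le_one _
      _ = δ / 2 := by rw [one_div_div]
  have hmem : δ / 2 ∈ Icc (gaussUpperPartialMoment (2 / δ)) (gaussUpperPartialMoment 0) :=
    ⟨hb.le, by rw [gaussUpperPartialMoment_zero]; linarith⟩
  obtain ⟨α, hα, hFα⟩ := intermediate_value_Icc' (by positivity)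
    continuous_gaussUpperPartialMoment.continuousOn hmem
  exact ⟨α, ⟨hα.1, hFα⟩, fun β hβ =>
    strictAnti_gaussUpperPartialMoment.injective (hβ.2.trans hFα.symm)⟩
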